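/- arXiv:1301.7248 — 7 statements merged into one kernel-verified Lean document; each statement's English description precedes it below -/
import Mathlib

section
/- Let X be a complex Hilbert space and J : X → X a bounded invertible operator with J* = −J, and set ω(x,y) := ⟨Jx,y⟩. Let T := (J*J)^{1/2} denote the positive square root of the positive invertible operator J*J. Then ⟨x,y⟩' := ⟨Tx,y⟩ defines an inner product on X whose associated norm is equivalent to the original norm, the operator J' := T⁻¹J satisfies (J')² = −I, and ω(x,y) = ⟨J'x,y⟩' for all x,y ∈ X. -/
/-!
Since `T * T = J† J = -J²` commutes with `J` and `T` is the positive square root of it, `T` commutes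
with `J`; `T` is invertible because its square is. Hence `(T⁻¹J)² = T⁻²J² = -1`. For the lower
norm bound write `T = R† R`: then `re ⟪T x, x⟫ = ‖R x‖²`, and `R` has the left inverse `T⁻¹ R†`.
-/

theorem Commute.of_mul_self_of_nonneg {A : Type*} [CStarAlgebra A] [PartialOrder A]
    [StarOrderedRing A] {a t : A} (ht : 0 ≤ t) (h : Commute a (t * t)) : Commute a t := by
  rw [← CFC.sqrt_unique rfl ht]
  exact (h.symm.cfcₙ_nnreal _).symm

theorem mul_self_eq_neg_one_of_mul_eq {R : Type*} [Ring R] {t j j' : R} (ht : IsUnit t)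
    (hcomm : Commute t j) (htt : t * t = -(j * j)) (hj' : t * j' = j) : j' * j' = -1 := by
  refine (ht.mul ht).mul_left_cancel ?_
  calc t * t * (j' * j') = t * j * j' := by rw [← hj']; noncomm_ring
    _ = j * j := by rw [hcomm.eq, mul_assoc, hj']
    _ = t * t * -1 := by rw [htt, mul_neg_one, neg_neg]

namespace ContinuousLinearMap

theorem norm_le_norm_mul_norm_apply_of_comp_eq_id {𝕜 E F : Type*}
    [NontriviallyNormedField 𝕜] [SeminormedAddCommGroup E] [NormedSpace 𝕜 E]
    [SeminormedAddCommGroup F] [NormedSpace 𝕜 F] {S : F →L[𝕜] E} {R : E →L[𝕜] F}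
    (h : S.comp R = .id 𝕜 E) (x : E) : ‖x‖ ≤ ‖S‖ * ‖R x‖ :=
  calc ‖x‖ = ‖S.comp R x‖ := by rw [h, id_apply]
    _ ≤ ‖S‖ * ‖R x‖ := S.le_opNorm _

theorem re_inner_apply_self_le {𝕜 E : Type*} [RCLike 𝕜]
    [SeminormedAddCommGroup E] [InnerProductSpace 𝕜 E] (T : E →L[𝕜] E) (x : E) :
    RCLike.re (inner 𝕜 (T x) x) ≤ ‖T‖ * ‖x‖ ^ 2 :=
  calc RCLike.re (inner 𝕜 (T x) x) ≤ ‖T x‖ * ‖x‖ := re_inner_le_norm _ _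
    _ ≤ ‖T‖ * ‖x‖ * ‖x‖ := by gcongr; exact T.le_opNorm x
    _ = ‖T‖ * ‖x‖ ^ 2 := by ring

theorem exists_pos_mul_norm_sq_le_re_inner_of_isUnit {E : Type*}
    [NormedAddCommGroup E] [InnerProductSpace ℂ E] [CompleteSpace E] {T : E →L[ℂ] E}
    (hT0 : 0 ≤ T) (hT : IsUnit T) : ∃ c > (0 : ℝ), ∀ x, c * ‖x‖ ^ 2 ≤ (inner ℂ (T x) x).re := by
  obtain ⟨R, rfl⟩ := CStarAlgebra.nonneg_iff_eq_star_mul_self.mp hT0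
  obtain ⟨u, hu⟩ := hT
  set S := ↑u⁻¹ * star R
  have hSR : S * R = 1 := by rw [mul_assoc, ← hu, Units.inv_mul]
  refine ⟨(‖S‖ ^ 2 + 1)⁻¹, by positivity, fun x => ?_⟩
  have hRx : ‖R x‖ ^ 2 = (inner ℂ ((star R * R) x) x).re := by
    rw [star_eq_adjoint]; exact apply_norm_sq_eq_inner_adjoint_left R x
  have hx := norm_le_norm_mul_norm_apply_of_comp_eq_id hSR x
  rw [← hRx, inv_mul_le_iff₀ (by positivity)]
  nlinarith [norm_nonneg x, norm_nonneg (R x), norm_nonneg S]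

end ContinuousLinearMap

/-- For a strong symplectic Hilbert space `(X, ω)` with `ω(x,y) = ⟨Jx,y⟩`,
`J` bounded invertible, `J* = -J`, and `T` the positive square root of `J*J`,
the form `⟨x,y⟩' := ⟨Tx,y⟩` is an inner product with norm equivalent to the original one,
`J' := T⁻¹J` satisfies `J'² = -I`, and `ω(x,y) = ⟨J'x,y⟩'`. -/
theorem weak_strong_deformation
    {X : Type*} [NormedAddCommGroup X] [InnerProductSpace ℂ X] [CompleteSpace X]
    (J : X →L[ℂ] X)
    (hJskew : ContinuousLinearMap.adjoint J = -J)
    (hJinv : ∃ Jinv : X →L[ℂ] X,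
      J.comp Jinv = ContinuousLinearMap.id ℂ X ∧ Jinv.comp J = ContinuousLinearMap.id ℂ X)
    -- `T` is the positive square root of `J*J`
    (T : X →L[ℂ] X) (hTpos : T.IsPositive)
    (hTsq : T.comp T = (ContinuousLinearMap.adjoint J).comp J) :
    -- `⟨x,y⟩' := ⟨Tx,y⟩` is an inner product (conjugate symmetric and positive definite;
    -- sesquilinearity is automatic):
    ((∀ x y : X, (inner ℂ (T y) x : ℂ) = starRingEnd ℂ (inner ℂ (T x) y : ℂ)) ∧
      (∀ x : X, x ≠ 0 → 0 < (inner ℂ (T x) x : ℂ).re)) ∧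
    -- the associated norm is equivalent to the original norm:
    (∃ c > (0 : ℝ), ∃ C > (0 : ℝ), ∀ x : X,
      c * ‖x‖ ^ 2 ≤ (inner ℂ (T x) x : ℂ).re ∧ (inner ℂ (T x) x : ℂ).re ≤ C * ‖x‖ ^ 2) ∧
    -- `J' := T⁻¹ J` exists (uniquely determined by `T ∘ J' = J`):
    (∃! J' : X →L[ℂ] X, T.comp J' = J) ∧
    -- and it satisfies `(J')² = -I` and `ω(x,y) = ⟨J'x,y⟩'`:
    (∀ J' : X →L[ℂ] X, T.comp J' = J →
      J'.comp J' = -ContinuousLinearMap.id ℂ X ∧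
      ∀ x y : X, (inner ℂ (J x) y : ℂ) = (inner ℂ (T (J' x)) y : ℂ)) := by
  obtain ⟨Jinv, hJJinv, hJinvJ⟩ := hJinv
  have hJ : IsUnit J := ⟨⟨J, Jinv, hJJinv, hJinvJ⟩, rfl⟩
  have hT0 : 0 ≤ T := (ContinuousLinearMap.nonneg_iff_isPositive T).mpr hTpos
  have hTT : T * T = -(J * J) := by rw [← neg_mul, ← hJskew]; exact hTsq
  have hT : IsUnit T := (isUnit_pow_iff two_ne_zero).mp (by rw [sq, hTT]; exact (hJ.mul hJ).neg)
  have hTJ : Commute T J := by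
    refine (Commute.of_mul_self_of_nonneg hT0 ?_).symm
    rw [hTT]
    exact ((Commute.refl J).mul_right (Commute.refl J)).neg_right
  obtain ⟨c, hc, hlower⟩ := ContinuousLinearMap.exists_pos_mul_norm_sq_le_re_inner_of_isUnit hT0 hT
  refine ⟨⟨fun x y => ?_, fun x hx => ?_⟩, ⟨c, hc, ‖T‖ + 1, by positivity, fun x => ⟨hlower x, ?_⟩⟩,
    (IsUnit.isUnit_iff_mulLeft_bijective.mp hT).existsUnique J,
    fun J' hJ' => ⟨mul_self_eq_neg_one_of_mul_eq hT hTJ hTT hJ', fun x y => by rw [← hJ']; rfl⟩⟩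
  · exact (hTpos.isSelfAdjoint.isSymmetric y x).trans (inner_conj_symm _ _).symm
  · exact lt_of_lt_of_le (by positivity) (hlower x)
  · calc (inner ℂ (T x) x).re ≤ ‖T‖ * ‖x‖ ^ 2 := T.re_inner_apply_self_le x
      _ ≤ (‖T‖ + 1) * ‖x‖ ^ 2 := by gcongr; linarith
end

section
/- Let X be a complex Hilbert space, J : X → X a bounded invertible operator with J* = −J, and ω(x,y) := ⟨Jx,y⟩. Let λ and μ be Lagrangian subspaces of (X, ω) (i.e. λ = λ^ω and μ = μ^ω) such that dim(λ ∩ μ) < ∞ and dim X/(λ + μ) < ∞. Then dim(λ ∩ μ) = dim X/(λ + μ), i.e. every Fredholm pair of Lagrangian subspaces of a strong symplectic Hilbert space has index 0. -/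
/-!
A Lagrangian subspace `λ = (Jλ)ᗮ` is closed, and since `J` is a homeomorphism so is `Jλ`; hence
`λᗮ = Jλ`. Taking orthogonal complements turns sums into intersections, so for Lagrangians `λ, μ`
we get `(λ + μ)ᗮ = λᗮ ∩ μᗮ = J(λ ∩ μ)`, which has the dimension of `λ ∩ μ`. Finally `λ + μ` is
closed, being a sum of closed subspaces with finite codimension (open mapping theorem), so
`X/(λ + μ) ≅ (λ + μ)ᗮ`.
-/

/-- The annihilator of a set `S` with respect to a sesquilinear form `ω`:
`S^ω = {y | ω(x,y) = 0 for all x ∈ S}`. -/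
def annSet {X : Type*} (ω : X → X → ℂ) (S : Set X) : Set X :=
  {y | ∀ x ∈ S, ω x y = 0}

namespace ContinuousLinearMap

variable {𝕜 E F : Type*} [NontriviallyNormedField 𝕜] [CompleteSpace 𝕜]
  [NormedAddCommGroup E] [NormedSpace 𝕜 E] [CompleteSpace E]
  [NormedAddCommGroup F] [NormedSpace 𝕜 F] [CompleteSpace F]

/-- Extending `T` by a finite-dimensional complement `W` of its range gives a surjection
`E × W → F`, hence a quotient map, under which the range of `T` pulls back to `E × {0}`. -/
theorem isClosed_range_of_finiteDimensional_quotient (T : E →L[𝕜] F)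
    [FiniteDimensional 𝕜 (F ⧸ T.range)] : IsClosed (T.range : Set F) := by
  obtain ⟨W, hW⟩ := T.range.exists_isCompl
  have : FiniteDimensional 𝕜 W := (T.range.quotientEquivOfIsCompl W hW).finiteDimensional
  have : CompleteSpace W := FiniteDimensional.complete 𝕜 W
  let S : E × W →L[𝕜] F := T.coprod W.subtypeL
  have hS : Function.Surjective S := by
    have hrange : S.range = ⊤ := by
      rw [range_coprod, Submodule.toLinearMap_subtypeL, Submodule.range_subtype, hW.sup_eq_top]
    exact LinearMap.range_eq_top.mp hrange
  have hpre : S ⁻¹' T.range = Prod.snd ⁻¹' {0} := by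
    ext ⟨e, w⟩
    simp only [Set.mem_preimage, SetLike.mem_coe, Set.mem_singleton_iff, S, coprod_apply,
      Submodule.coe_subtypeL, Submodule.coe_subtype]
    constructor
    · intro h
      have hw : (w : F) ∈ T.range := by simpa using T.range.sub_mem h ⟨e, rfl⟩
      exact Subtype.ext (Submodule.disjoint_def.mp hW.disjoint _ hw w.2)
    · rintro rfl
      rw [ZeroMemClass.coe_zero, add_zero]
      exact LinearMap.mem_range_self _ e
  have hq : Topology.IsQuotientMap S := (S.isOpenMap hS).isQuotientMap S.continuous hS
  rw [← hq.isCoinducing.isClosed_preimage, hpre]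
  exact isClosed_singleton.preimage continuous_snd

end ContinuousLinearMap

namespace Submodule

theorem isClosed_sup_of_finiteDimensional_quotient {𝕜 F : Type*} [NontriviallyNormedField 𝕜]
    [CompleteSpace 𝕜] [NormedAddCommGroup F] [NormedSpace 𝕜 F] [CompleteSpace F]
    {A B : Submodule 𝕜 F} (hA : IsClosed (A : Set F)) (hB : IsClosed (B : Set F))
    [FiniteDimensional 𝕜 (F ⧸ (A ⊔ B))] : IsClosed ((A ⊔ B : Submodule 𝕜 F) : Set F) := by
  have : CompleteSpace A := hA.completeSpace_coe
  have : CompleteSpace B := hB.completeSpace_coe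
  have hrange : (A.subtypeL.coprod B.subtypeL).range = A ⊔ B := by
    rw [ContinuousLinearMap.range_coprod, toLinearMap_subtypeL, toLinearMap_subtypeL,
      range_subtype, range_subtype]
  have : FiniteDimensional 𝕜 (F ⧸ (A.subtypeL.coprod B.subtypeL).range) := by
    rwa [hrange]
  have := (A.subtypeL.coprod B.subtypeL).isClosed_range_of_finiteDimensional_quotient
  rwa [hrange] at this

theorem finrank_quotient_eq_finrank_orthogonal {𝕜 E : Type*} [RCLike 𝕜] [NormedAddCommGroup E]
    [InnerProductSpace 𝕜 E] (K : Submodule 𝕜 E) [K.HasOrthogonalProjection] :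
    Module.finrank 𝕜 (E ⧸ K) = Module.finrank 𝕜 Kᗮ :=
  (K.quotientEquivOfIsCompl Kᗮ K.isCompl_orthogonal).finrank_eq

end Submodule

section Lagrangian

variable {X : Type*} [NormedAddCommGroup X] [InnerProductSpace ℂ X]

def IsLagrangian (J : X →L[ℂ] X) (p : Submodule ℂ X) : Prop :=
  (p : Set X) = annSet (fun x y => inner ℂ (J x) y) p

theorem annSet_inner_eq_orthogonal_map (J : X →L[ℂ] X) (p : Submodule ℂ X) :
    annSet (fun x y => inner ℂ (J x) y) p = ((p.map (J : X →ₗ[ℂ] X))ᗮ : Set X) := by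
  ext y
  simp only [annSet, SetLike.mem_coe, Submodule.mem_orthogonal, Submodule.mem_map,
    forall_exists_index, and_imp, forall_apply_eq_imp_iff₂]
  rfl

namespace IsLagrangian

variable {p q : Submodule ℂ X}

theorem eq_orthogonal_map {J : X →L[ℂ] X} (h : IsLagrangian J p) :
    p = (p.map (J : X →ₗ[ℂ] X))ᗮ :=
  SetLike.coe_injective (h.trans (annSet_inner_eq_orthogonal_map J p))

theorem isClosed {J : X →L[ℂ] X} (h : IsLagrangian J p) : IsClosed (p : Set X) := by
  rw [h.eq_orthogonal_map]
  exact Submodule.isClosed_orthogonal _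

variable [CompleteSpace X] {J : X ≃L[ℂ] X}

theorem orthogonal_eq_map (h : IsLagrangian (J : X →L[ℂ] X) p) :
    pᗮ = p.map (J : X →ₗ[ℂ] X) := by
  have hclosed : IsClosed (p.map (J : X →ₗ[ℂ] X) : Set X) := by
    rw [Submodule.map_coe]
    exact J.toHomeomorph.isClosedMap _ h.isClosed
  conv_lhs => rw [h.eq_orthogonal_map]
  rw [Submodule.orthogonal_orthogonal_eq_closure]
  exact hclosed.submodule_topologicalClosure_eq

theorem orthogonal_sup_eq_map_inf (hp : IsLagrangian (J : X →L[ℂ] X) p)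
    (hq : IsLagrangian (J : X →L[ℂ] X) q) :
    (p ⊔ q)ᗮ = (p ⊓ q).map (J : X →ₗ[ℂ] X) := by
  rw [← Submodule.inf_orthogonal, hp.orthogonal_eq_map, hq.orthogonal_eq_map,
    Submodule.map_inf _ J.injective]

theorem finrank_inf_eq_finrank_quotient_sup (hp : IsLagrangian (J : X →L[ℂ] X) p)
    (hq : IsLagrangian (J : X →L[ℂ] X) q) [FiniteDimensional ℂ (X ⧸ (p ⊔ q))] :
    Module.finrank ℂ ↥(p ⊓ q) = Module.finrank ℂ (X ⧸ (p ⊔ q)) := by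
  have hclosed := Submodule.isClosed_sup_of_finiteDimensional_quotient hp.isClosed hq.isClosed
  have : CompleteSpace ↥(p ⊔ q) := hclosed.completeSpace_coe
  rw [Submodule.finrank_quotient_eq_finrank_orthogonal, hp.orthogonal_sup_eq_map_inf hq]
  exact (J.toLinearEquiv.submoduleMap (p ⊓ q)).finrank_eq

end IsLagrangian

end Lagrangian

theorem fredholm_pair_of_lagrangians_index_zero_general
    {X : Type*} [NormedAddCommGroup X] [InnerProductSpace ℂ X] [CompleteSpace X]
    (J : X →L[ℂ] X)
    (hJinv : ∃ Jinv : X →L[ℂ] X,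
      J.comp Jinv = ContinuousLinearMap.id ℂ X ∧ Jinv.comp J = ContinuousLinearMap.id ℂ X)
    (lam mu : Submodule ℂ X)
    -- `λ` and `μ` are Lagrangian: each equals its annihilator w.r.t. `ω(x,y) = ⟨Jx,y⟩`
    (hlam : (lam : Set X) = annSet (fun x y => (inner ℂ (J x) y : ℂ)) (lam : Set X))
    (hmu : (mu : Set X) = annSet (fun x y => (inner ℂ (J x) y : ℂ)) (mu : Set X))
    -- `(λ, μ)` is a Fredholm pair
    (hfin₂ : FiniteDimensional ℂ (X ⧸ (lam ⊔ mu))) :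
    Module.finrank ℂ ↥(lam ⊓ mu) = Module.finrank ℂ (X ⧸ (lam ⊔ mu)) := by
  obtain ⟨Jinv, hJJinv, hJinvJ⟩ := hJinv
  let e : X ≃L[ℂ] X := .equivOfInverse' J Jinv hJJinv hJinvJ
  exact IsLagrangian.finrank_inf_eq_finrank_quotient_sup (J := e) hlam hmu

/-- In a strong symplectic Hilbert space `(X, ω)`, `ω(x,y) = ⟨Jx,y⟩` with `J`
bounded invertible and `J* = -J`, every Fredholm pair `(λ, μ)` of Lagrangian subspaces has
index `0`, i.e. `dim (λ ∩ μ) = dim X/(λ + μ)`. -/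
theorem fredholm_pair_of_lagrangians_index_zero
    {X : Type*} [NormedAddCommGroup X] [InnerProductSpace ℂ X] [CompleteSpace X]
    (J : X →L[ℂ] X)
    (hJskew : ContinuousLinearMap.adjoint J = -J)
    (hJinv : ∃ Jinv : X →L[ℂ] X,
      J.comp Jinv = ContinuousLinearMap.id ℂ X ∧ Jinv.comp J = ContinuousLinearMap.id ℂ X)
    (lam mu : Submodule ℂ X)
    -- `λ` and `μ` are Lagrangian: each equals its annihilator w.r.t. `ω(x,y) = ⟨Jx,y⟩`
    (hlam : (lam : Set X) = annSet (fun x y => (inner ℂ (J x) y : ℂ)) (lam : Set X))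
    (hmu : (mu : Set X) = annSet (fun x y => (inner ℂ (J x) y : ℂ)) (mu : Set X))
    -- `(λ, μ)` is a Fredholm pair
    (hfin₁ : FiniteDimensional ℂ ↥(lam ⊓ mu))
    (hfin₂ : FiniteDimensional ℂ (X ⧸ (lam ⊔ mu))) :
    Module.finrank ℂ ↥(lam ⊓ mu) = Module.finrank ℂ (X ⧸ (lam ⊔ mu)) :=
  fredholm_pair_of_lagrangians_index_zero_general J hJinv lam mu hlam hmu hfin₂
end

section
/- Let (X, ω) be a strong symplectic Banach space with a symplectic splitting X = X⁺ ⊕ X⁻, and let λ be a closed isotropic subspace, written as the graph λ = {x + Ux : x ∈ dom(U)} of the injective operator U : dom(U) → X⁻ with dom(U) ⊆ X⁺. Then dom(U) and ran(U) are closed. If moreover λ is Lagrangian, then dom(U) = X⁺ and ran(U) = X⁻, and U is a bounded bijection from X⁺ onto X⁻ with bounded inverse. -/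
/-!
The form `ω` is a continuous sesquilinear map `B`, and non-degeneracy plus strongness make
`x ↦ B x` a bijection onto the conjugate dual, so by the open mapping theorem `‖x‖ ≤ K ‖B x‖`.
On `X⁺` the Hermitian form `-i B` is an inner product, and `B x y = B x (P y)` for the bounded
projection `P` onto `X⁺` along `X⁻`; Cauchy–Schwarz then gives `‖x‖² ≤ C re(-i B(x,x))` on `X⁺`.
Everything said about `X⁺` holds for `X⁻` by passing to the splitting `(-B, X⁻, X⁺)`.
Isotropy of `x + Ux` says `re(-i B(x,x)) = re(i B(Ux,Ux))`, so `U` and its inverse are bounded;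
hence the projections onto `X⁺` and `X⁻` are bounded below on the closed subspace `λ`, and their
images `dom U` and `ran U` are closed. If `λ` is Lagrangian, the closed subspace
`dom U ⊕ X⁻ = P⁻¹(dom U)` has trivial annihilator: an annihilating vector lies in `λ^ω = λ`, and
definiteness on `X⁻` and on `X⁺` forces it to vanish. By Hahn–Banach and strongness this subspace
is all of `X`, that is `dom U = X⁺`; symmetrically `ran U = X⁻`.
-/

open ComplexConjugate

theorem Function.Bijective.neg {α β : Type*} [InvolutiveNeg β] {f : α → β}
    (hf : Function.Bijective f) : Function.Bijective (-f) :=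
  neg_involutive.bijective.comp hf

theorem isClosed_image_of_mul_norm_le {𝕜 E F : Type*} [NontriviallyNormedField 𝕜]
    [NormedAddCommGroup E] [NormedSpace 𝕜 E] [CompleteSpace E]
    [NormedAddCommGroup F] [NormedSpace 𝕜 F] {S : Submodule 𝕜 E} (hS : IsClosed (S : Set E))
    (f : E →L[𝕜] F) {c : ℝ} (hc : 0 < c) (hf : ∀ z ∈ S, c * ‖z‖ ≤ ‖f z‖) :
    IsClosed (f '' S) := by
  have := hS.completeSpace_coe
  obtain ⟨K, hK⟩ := antilipschitzWith_iff_exists_mul_le_norm (f := f ∘L S.subtypeL) |>.2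
    ⟨c, hc, fun z => hf z z.2⟩
  rw [Set.image_eq_range]
  exact hK.isClosed_range (f ∘L S.subtypeL).uniformContinuous

section Graph

variable {R M : Type*} [Ring R] [AddCommGroup M] [Module R M] [TopologicalSpace M]
  {p q D : Submodule R M}

theorem Submodule.projectionL_add_of_mem (hpq : p.IsTopCompl q) {x y : M} (hx : x ∈ p)
    (hy : y ∈ q) : p.projectionL q hpq (x + y) = x := by
  rw [map_add, (p.projectionL_eq_self_iff hpq x).2 hx,
    Submodule.projectionL_apply_eq_zero_of_mem_right hpq hy, add_zero]

theorem Submodule.image_projectionL_graph_eq_domain (hpq : p.IsTopCompl q) (hD : D ≤ p)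
    (U : D →ₗ[R] M) (hU : ∀ v, U v ∈ q) :
    p.projectionL q hpq '' {z | ∃ v : D, z = v + U v} = D := by
  ext x
  constructor
  · rintro ⟨_, ⟨v, rfl⟩, rfl⟩
    rw [Submodule.projectionL_add_of_mem hpq (hD v.2) (hU v)]
    exact v.2
  · intro hx
    exact ⟨_, ⟨⟨x, hx⟩, rfl⟩, Submodule.projectionL_add_of_mem hpq (hD hx) (hU _)⟩

theorem Submodule.image_projectionL_graph_eq_range [ContinuousSub M] (hpq : p.IsTopCompl q)
    (hD : D ≤ p) (U : D →ₗ[R] M) (hU : ∀ v, U v ∈ q) :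
    q.projectionL p hpq.symm '' {z | ∃ v : D, z = v + U v} = Set.range U := by
  ext y
  constructor
  · rintro ⟨_, ⟨v, rfl⟩, rfl⟩
    rw [add_comm, Submodule.projectionL_add_of_mem hpq.symm (hU v) (hD v.2)]
    exact ⟨v, rfl⟩
  · rintro ⟨v, rfl⟩
    refine ⟨_, ⟨v, rfl⟩, ?_⟩
    rw [add_comm, Submodule.projectionL_add_of_mem hpq.symm (hU v) (hD v.2)]

end Graph

section SesquilinearForm

variable {X : Type*} [NormedAddCommGroup X] [NormedSpace ℂ X]

theorem exists_continuousSesqForm_eq (ω : X → X → ℂ)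
    (h1add : ∀ x y z : X, ω (x + y) z = ω x z + ω y z)
    (h1smul : ∀ (c : ℂ) (x y : X), ω (c • x) y = c * ω x y)
    (h2add : ∀ x y z : X, ω x (y + z) = ω x y + ω x z)
    (h2smul : ∀ (c : ℂ) (x y : X), ω x (c • y) = conj c * ω x y)
    (hbound : ∃ C : ℝ, ∀ x y : X, ‖ω x y‖ ≤ C * ‖x‖ * ‖y‖) :
    ∃ B : X →L[ℂ] X →L⋆[ℂ] ℂ, ω = fun x y => B x y := by
  obtain ⟨C, hC⟩ := hbound
  exact ⟨(LinearMap.mk₂'ₛₗ (RingHom.id ℂ) (starRingEnd ℂ) ω h1add h1smul h2add h2smul).mkContinuous₂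
    C hC, rfl⟩

theorem abs_im_apply_self_le (B : X →L[ℂ] X →L⋆[ℂ] ℂ) (x : X) :
    |(B x x).im| ≤ ‖B‖ * ‖x‖ ^ 2 :=
  (Complex.abs_im_le_norm _).trans (by simpa [sq, mul_assoc] using B.le_opNorm₂ x x)

theorem isClosed_of_orthogonal_sup_eq_top (B : X →L[ℂ] X →L⋆[ℂ] ℂ) {V W : Submodule ℂ X}
    (hsup : V ⊔ W = ⊤) (horth : ∀ v ∈ V, ∀ w ∈ W, B v w = 0)
    (hdef : ∀ w ∈ W, B w w = 0 → w = 0) : IsClosed (V : Set X) := by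
  suffices (V : Set X) = ⋂ w ∈ W, {x | B x w = 0} by
    rw [this]
    exact isClosed_biInter fun w _ =>
      isClosed_eq ((continuous_eval_const w).comp B.continuous) continuous_const
  ext x
  simp only [SetLike.mem_coe, Set.mem_iInter, Set.mem_ofPred_eq]
  refine ⟨fun hx w hw => horth x hx w hw, fun hx => ?_⟩
  obtain ⟨v, hv, w, hw, rfl⟩ := Submodule.mem_sup.1 (hsup ▸ Submodule.mem_top : x ∈ V ⊔ W)
  have hww : B w w = 0 := by simpa [horth v hv w hw] using hx w hw
  simpa [hdef w hw hww] using hv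

def IsSkewHermitian (B : X →L[ℂ] X →L⋆[ℂ] ℂ) : Prop :=
  ∀ x y, B y x = -conj (B x y)

namespace IsSkewHermitian

variable {B : X →L[ℂ] X →L⋆[ℂ] ℂ}

theorem neg (hB : IsSkewHermitian B) : IsSkewHermitian (-B) := fun x y => by
  simp [hB x y]

theorem norm_apply_comm (hB : IsSkewHermitian B) (x y : X) : ‖B y x‖ = ‖B x y‖ := by
  rw [hB, norm_neg, Complex.norm_conj]

theorem norm_sq_apply_le (hB : IsSkewHermitian B) {V : Submodule ℂ X}
    (hV : ∀ v ∈ V, 0 ≤ (B v v).im) {u v : X} (hu : u ∈ V) (hv : v ∈ V) :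
    ‖B u v‖ ^ 2 ≤ (B u u).im * (B v v).im := by
  let _ : PreInnerProductSpace.Core ℂ V :=
    { inner := fun x y => -Complex.I * B y x
      conj_inner_symm := fun x y => by simp [hB (x : X) y]
      re_inner_nonneg := fun x => by simpa using hV x x.2
      add_left := fun x y z => by simp [mul_add]
      smul_left := fun x y r => by simp; ring }
  have := InnerProductSpace.Core.inner_mul_inner_self_le (𝕜 := ℂ) (⟨u, hu⟩ : V) ⟨v, hv⟩
  change ‖-Complex.I * B v u‖ * ‖-Complex.I * B u v‖
    ≤ (-Complex.I * B u u).re * (-Complex.I * B v v).re at this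
  simpa [sq, hB.norm_apply_comm u v] using this

theorem eq_top_of_annSet_subset_zero (hB : IsSkewHermitian B) (hsurj : Function.Surjective B)
    {W : Submodule ℂ X} (hW : IsClosed (W : Set X))
    (hann : annSet (fun x y => B x y) W ⊆ {0}) : W = ⊤ := by
  refine eq_top_iff.2 fun u _ => ?_
  by_contra hu
  have : IsClosed (W : Set X) := hW
  obtain ⟨f, hf⟩ := SeparatingDual.exists_ne_zero (R := ℂ) (x := W.mkQ u)
    (by rwa [ne_eq, Submodule.mkQ_apply, Submodule.Quotient.mk_eq_zero])
  obtain ⟨y, hy⟩ := hsurj (((starL ℂ : ℂ ≃L⋆[ℂ] ℂ) : ℂ →L⋆[ℂ] ℂ).comp (f ∘L W.mkQL))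
  have hy0 : y = 0 := hann fun x hx => by
    change B x y = 0
    rw [hB y x, hy]
    simp [(Submodule.Quotient.mk_eq_zero W).2 hx]
  apply hf
  simpa [hy0] using (congr($hy u)).symm

end IsSkewHermitian

/-- `(B x x).im` is `re (-i B(x,x))`, the Hermitian form of the splitting. -/
structure IsSymplecticSplitting (B : X →L[ℂ] X →L⋆[ℂ] ℂ) (Xp Xm : Submodule ℂ X) : Prop where
  isCompl : IsCompl Xp Xm
  orthogonal : ∀ x ∈ Xp, ∀ y ∈ Xm, B x y = 0
  im_pos : ∀ x ∈ Xp, x ≠ 0 → 0 < (B x x).im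
  im_neg : ∀ y ∈ Xm, y ≠ 0 → (B y y).im < 0

namespace IsSymplecticSplitting

variable {B : X →L[ℂ] X →L⋆[ℂ] ℂ} {Xp Xm L : Submodule ℂ X}

theorem orthogonal' (hB : IsSkewHermitian B) (h : IsSymplecticSplitting B Xp Xm) :
    ∀ y ∈ Xm, ∀ x ∈ Xp, B y x = 0 := fun y hy x hx => by
  rw [hB, h.orthogonal x hx y hy, map_zero, neg_zero]

theorem symm (hB : IsSkewHermitian B) (h : IsSymplecticSplitting B Xp Xm) :
    IsSymplecticSplitting (-B) Xm Xp where
  isCompl := h.isCompl.symm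
  orthogonal y hy x hx := by simp [h.orthogonal' hB y hy x hx]
  im_pos y hy hy0 := by simpa using h.im_neg y hy hy0
  im_neg x hx hx0 := by simpa using h.im_pos x hx hx0

theorem im_apply_self_nonneg (h : IsSymplecticSplitting B Xp Xm) {x : X} (hx : x ∈ Xp) :
    0 ≤ (B x x).im := by
  rcases eq_or_ne x 0 with rfl | hx0
  · simp
  · exact (h.im_pos x hx hx0).le

theorem eq_zero_of_apply_self_eq_zero (h : IsSymplecticSplitting B Xp Xm) {x : X} (hx : x ∈ Xp)
    (hxx : B x x = 0) : x = 0 := by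
  by_contra hx0
  simpa [hxx] using h.im_pos x hx hx0

theorem apply_add_add (hB : IsSkewHermitian B) (h : IsSymplecticSplitting B Xp Xm) {x y : X}
    (hx : x ∈ Xp) (hy : y ∈ Xm) : B (x + y) (x + y) = B x x + B y y := by
  simp [h.orthogonal x hx y hy, h.orthogonal' hB y hy x hx]

theorem isClosed_left (h : IsSymplecticSplitting B Xp Xm) : IsClosed (Xp : Set X) := by
  refine isClosed_of_orthogonal_sup_eq_top B h.isCompl.sup_eq_top h.orthogonal fun y hy hyy => ?_
  by_contra hy0
  simpa [hyy] using h.im_neg y hy hy0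

theorem isTopCompl [CompleteSpace X] (hB : IsSkewHermitian B)
    (h : IsSymplecticSplitting B Xp Xm) : Xp.IsTopCompl Xm :=
  Submodule.IsCompl.isTopCompl_of_isClosed h.isCompl h.isClosed_left (h.symm hB).isClosed_left

theorem exists_norm_sq_le [CompleteSpace X] (hB : IsSkewHermitian B)
    (hBij : Function.Bijective B) (h : IsSymplecticSplitting B Xp Xm) :
    ∃ C ≥ 0, ∀ x ∈ Xp, ‖x‖ ^ 2 ≤ C * (B x x).im := by
  obtain ⟨K, hK⟩ := (B.bijective_iff_dense_range_and_antilipschitz.1 hBij).2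
  set P := Xp.projectionL Xm (h.isTopCompl hB)
  refine ⟨K ^ 2 * (‖B‖ * ‖P‖ ^ 2), by positivity, fun x hx => ?_⟩
  have hxB : 0 ≤ (B x x).im * ‖B‖ := mul_nonneg (h.im_apply_self_nonneg hx) (norm_nonneg B)
  have hBx : ‖B x‖ ≤ √((B x x).im * ‖B‖) * ‖P‖ := by
    refine (B x).opNorm_le_bound (by positivity) fun y => ?_
    have hPy : B x y = B x (P y) := by
      conv_lhs => rw [← Submodule.projectionL_add_projectionL_eq_self (h.isTopCompl hB) y]
      rw [map_add, h.orthogonal x hx _ (Submodule.projectionL_apply_mem _ _), add_zero]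
    refine (pow_le_pow_iff_left₀ (norm_nonneg _) (by positivity) two_ne_zero).1 ?_
    rw [hPy, mul_pow, mul_pow, Real.sq_sqrt hxB]
    calc ‖B x (P y)‖ ^ 2 ≤ (B x x).im * (B (P y) (P y)).im :=
          hB.norm_sq_apply_le (fun _ => h.im_apply_self_nonneg) hx
            (Submodule.projectionL_apply_mem _ _)
      _ ≤ (B x x).im * (‖B‖ * ‖P y‖ ^ 2) := by
          gcongr
          · exact h.im_apply_self_nonneg hx
          · exact (le_abs_self _).trans (abs_im_apply_self_le B _)
      _ ≤ (B x x).im * (‖B‖ * (‖P‖ * ‖y‖) ^ 2) := by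
          gcongr
          · exact h.im_apply_self_nonneg hx
          · exact P.le_opNorm y
      _ = (B x x).im * ‖B‖ * ‖P‖ ^ 2 * ‖y‖ ^ 2 := by ring
  calc ‖x‖ ^ 2 ≤ (K * ‖B x‖) ^ 2 := by gcongr; exact hK.le_mul_norm (map_zero B) x
    _ ≤ (K * (√((B x x).im * ‖B‖) * ‖P‖)) ^ 2 := by gcongr
    _ = K ^ 2 * (‖B‖ * ‖P‖ ^ 2) * (B x x).im := by
        rw [mul_pow, mul_pow, Real.sq_sqrt hxB]; ring

theorem exists_pos_mul_norm_le [CompleteSpace X] (hB : IsSkewHermitian B)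
    (hBij : Function.Bijective B) (h : IsSymplecticSplitting B Xp Xm) :
    ∃ c > 0, ∀ x ∈ Xp, ∀ y ∈ Xm, B (x + y) (x + y) = 0 → c * ‖x‖ ≤ ‖y‖ := by
  obtain ⟨C, hC0, hC⟩ := h.exists_norm_sq_le hB hBij
  set D := C * ‖B‖ + 1
  have hD : 0 < D := by positivity
  refine ⟨(√D)⁻¹, by positivity, fun x hx y hy hxy => ?_⟩
  have hxx : (B x x).im = -(B y y).im := by
    rw [h.apply_add_add hB hx hy, add_eq_zero_iff_eq_neg] at hxy
    simp [hxy]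
  have hsq : ‖x‖ ^ 2 ≤ (√D * ‖y‖) ^ 2 := calc
    ‖x‖ ^ 2 ≤ C * (B x x).im := hC x hx
    _ ≤ C * (‖B‖ * ‖y‖ ^ 2) := by
        rw [hxx]
        gcongr
        exact (neg_le_abs _).trans (abs_im_apply_self_le B y)
    _ ≤ (√D * ‖y‖) ^ 2 := by rw [mul_pow, Real.sq_sqrt hD.le]; nlinarith [sq_nonneg ‖y‖]
  rw [inv_mul_le_iff₀ (by positivity)]
  exact (pow_le_pow_iff_left₀ (norm_nonneg _) (by positivity) two_ne_zero).1 hsq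

theorem isClosed_image_projectionL [CompleteSpace X] (hB : IsSkewHermitian B)
    (hBij : Function.Bijective B) (h : IsSymplecticSplitting B Xp Xm)
    (hL : IsClosed (L : Set X)) (hiso : ∀ z ∈ L, B z z = 0) :
    IsClosed (Xp.projectionL Xm (h.isTopCompl hB) '' L) := by
  obtain ⟨c, hc, hQP⟩ := (h.symm hB).exists_pos_mul_norm_le hB.neg hBij.neg
  set P := Xp.projectionL Xm (h.isTopCompl hB)
  set Q := Xm.projectionL Xp (h.isTopCompl hB).symm
  refine isClosed_image_of_mul_norm_le hL P (c := c / (c + 1)) (by positivity) fun z hz => ?_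
  have hz_eq : Q z + P z = z := by
    rw [add_comm]; exact Submodule.projectionL_add_projectionL_eq_self _ z
  have hQ : c * ‖Q z‖ ≤ ‖P z‖ :=
    hQP _ (Submodule.projectionL_apply_mem _ _) _ (Submodule.projectionL_apply_mem _ _)
      (by rw [neg_apply, neg_apply, hz_eq, hiso z hz, neg_zero])
  have hz_le : ‖z‖ ≤ ‖P z‖ + ‖Q z‖ := by
    conv_lhs => rw [← hz_eq, add_comm]
    exact norm_add_le _ _
  calc c / (c + 1) * ‖z‖ ≤ c / (c + 1) * (‖P z‖ + ‖Q z‖) := by gcongr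
    _ ≤ ‖P z‖ := by
        rw [div_mul_eq_mul_div, div_le_iff₀ (by positivity)]
        nlinarith [norm_nonneg (P z)]

theorem image_projectionL_eq_of_lagrangian [CompleteSpace X] (hB : IsSkewHermitian B)
    (hBij : Function.Bijective B) (h : IsSymplecticSplitting B Xp Xm)
    (hL : IsClosed (L : Set X)) (hlag : (L : Set X) = annSet (fun x y => B x y) L) :
    Xp.projectionL Xm (h.isTopCompl hB) '' L = Xp := by
  set P := Xp.projectionL Xm (h.isTopCompl hB)
  have hiso : ∀ z ∈ L, B z z = 0 := fun z hz => hlag.subset hz z hz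
  set W := (L.map (P : X →ₗ[ℂ] X)).comap (P : X →ₗ[ℂ] X)
  have hLW : L ≤ W := fun z hz => ⟨z, hz, rfl⟩
  have hXmW : Xm ≤ W := fun y hy =>
    ⟨0, L.zero_mem, by
      rw [map_zero]; exact (Submodule.projectionL_apply_eq_zero_of_mem_right _ hy).symm⟩
  have hW : W = ⊤ := by
    refine hB.eq_top_of_annSet_subset_zero hBij.2
      ((h.isClosed_image_projectionL hB hBij hL hiso).preimage P.continuous) fun y hy => ?_
    have hyL : y ∈ L := by
      rw [← SetLike.mem_coe, hlag]
      exact fun x hx => hy x (hLW hx)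
    set Q := Xm.projectionL Xp (h.isTopCompl hB).symm
    have hy_eq : P y + Q y = y := Submodule.projectionL_add_projectionL_eq_self _ y
    have hQy : Q y = 0 := by
      refine (h.symm hB).eq_zero_of_apply_self_eq_zero (Submodule.projectionL_apply_mem _ _) ?_
      have hBQ : B (Q y) y = B (Q y) (Q y) := calc
        B (Q y) y = B (Q y) (P y + Q y) := by rw [hy_eq]
        _ = B (Q y) (Q y) := by
          rw [map_add, h.orthogonal' hB _ (Submodule.projectionL_apply_mem _ _) _
            (Submodule.projectionL_apply_mem _ _), zero_add]
      have hyQ : B (Q y) y = 0 := hy (Q y) (hXmW (Submodule.projectionL_apply_mem _ _))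
      rw [neg_apply, neg_apply, ← hBQ, hyQ, neg_zero]
    rw [← hy_eq, hQy, add_zero] at hyL ⊢
    exact h.eq_zero_of_apply_self_eq_zero (Submodule.projectionL_apply_mem _ _) (hiso _ hyL)
  refine Set.Subset.antisymm ?_ fun x hx => ?_
  · rintro _ ⟨z, -, rfl⟩
    exact Submodule.projectionL_apply_mem _ _
  · obtain ⟨z, hz, hPz⟩ := (hW ▸ Submodule.mem_top : x ∈ W)
    exact ⟨z, hz, hPz.trans ((Xp.projectionL_eq_self_iff _ x).2 hx)⟩

end IsSymplecticSplitting

end SesquilinearForm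

theorem closed_isotropic_graph_in_strong_space_general
    {X : Type*} [NormedAddCommGroup X] [NormedSpace ℂ X] [CompleteSpace X]
    (ω : X → X → ℂ)
    -- ω is linear in the first variable and conjugate linear in the second
    (h1add : ∀ x y z : X, ω (x + y) z = ω x z + ω y z)
    (h1smul : ∀ (c : ℂ) (x y : X), ω (c • x) y = c * ω x y)
    (h2add : ∀ x y z : X, ω x (y + z) = ω x y + ω x z)
    (h2smul : ∀ (c : ℂ) (x y : X), ω x (c • y) = starRingEnd ℂ c * ω x y)
    -- ω is skew-symmetric, non-degenerate and bounded
    (hskew : ∀ x y : X, ω y x = -starRingEnd ℂ (ω x y))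
    (hnondeg : ∀ x : X, (∀ y : X, ω x y = 0) → x = 0)
    (hbound : ∃ C : ℝ, ∀ x y : X, ‖ω x y‖ ≤ C * ‖x‖ * ‖y‖)
    -- ω is strong: every bounded conjugate-linear functional is of the form `ω(x,·)`
    (hstrong : ∀ f : X →SL[starRingEnd ℂ] ℂ, ∃ x : X, ∀ y : X, ω x y = f y)
    -- symplectic splitting X = X⁺ ⊕ X⁻
    (Xp Xm : Submodule ℂ X)
    (hinf : Xp ⊓ Xm = ⊥) (hsup : Xp ⊔ Xm = ⊤)
    (horth : ∀ x ∈ Xp, ∀ y ∈ Xm, ω x y = 0)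
    (hpos : ∀ x ∈ Xp, x ≠ 0 → 0 < (-Complex.I * ω x x).re)
    (hneg : ∀ x ∈ Xm, x ≠ 0 → (-Complex.I * ω x x).re < 0)
    -- λ is a closed isotropic subspace, written as the graph of U
    (lam : Submodule ℂ X)
    (hclosed : IsClosed (lam : Set X))
    (hiso : (lam : Set X) ⊆ annSet ω (lam : Set X))
    (dom : Submodule ℂ X) (U : ↥dom →ₗ[ℂ] X)
    (hdom : dom ≤ Xp) (hUran : ∀ v : ↥dom, U v ∈ Xm)
    (hgraph : (lam : Set X) = {z | ∃ v : ↥dom, z = (v : X) + U v}) :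
    -- dom(U) and ran(U) are closed
    IsClosed (dom : Set X) ∧
    IsClosed (Set.range fun v : ↥dom => U v) ∧
    -- if λ is Lagrangian, U is a bounded bijection from X⁺ onto X⁻ with bounded inverse
    ((lam : Set X) = annSet ω (lam : Set X) →
      dom = Xp ∧
      (Set.range fun v : ↥dom => U v) = (Xm : Set X) ∧
      (∃ C : ℝ, ∀ v : ↥dom, ‖U v‖ ≤ C * ‖(v : X)‖) ∧
      (∃ c > (0 : ℝ), ∀ v : ↥dom, c * ‖(v : X)‖ ≤ ‖U v‖)) := by
  obtain ⟨B, rfl⟩ := exists_continuousSesqForm_eq ω h1add h1smul h2add h2smul hbound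
  have hB : IsSkewHermitian B := hskew
  have hBij : Function.Bijective B :=
    ⟨(injective_iff_map_eq_zero B).2 fun x hx => hnondeg x fun y => by simp [hx],
      fun f => (hstrong f).imp fun _ hx => ContinuousLinearMap.ext hx⟩
  have h : IsSymplecticSplitting B Xp Xm :=
    ⟨⟨disjoint_iff.2 hinf, codisjoint_iff.2 hsup⟩, horth,
      fun x hx hx0 => by simpa using hpos x hx hx0, fun y hy hy0 => by simpa using hneg y hy hy0⟩
  have hlam : ∀ z ∈ lam, B z z = 0 := fun z hz => hiso hz z hz
  have hgraph_iso : ∀ v : dom, B (v + U v) (v + U v) = 0 := fun v =>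
    hlam _ (by rw [← SetLike.mem_coe, hgraph]; exact ⟨v, rfl⟩)
  have hdom_eq := Submodule.image_projectionL_graph_eq_domain (h.isTopCompl hB) hdom U hUran
  have hran_eq := Submodule.image_projectionL_graph_eq_range (h.isTopCompl hB) hdom U hUran
  rw [← hgraph] at hdom_eq hran_eq
  obtain ⟨c, hc, hlow⟩ := h.exists_pos_mul_norm_le hB hBij
  obtain ⟨c', hc', hup⟩ := (h.symm hB).exists_pos_mul_norm_le hB.neg hBij.neg
  refine ⟨?_, ?_, fun hlag => ⟨?_, ?_, ⟨c'⁻¹, fun v => ?_⟩, ⟨c, hc, fun v => ?_⟩⟩⟩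
  · rw [← hdom_eq]
    exact h.isClosed_image_projectionL hB hBij hclosed hlam
  · rw [← hran_eq]
    exact (h.symm hB).isClosed_image_projectionL hB.neg hBij.neg hclosed (by simpa using hlam)
  · exact SetLike.coe_injective
      (hdom_eq.symm.trans (h.image_projectionL_eq_of_lagrangian hB hBij hclosed hlag))
  · exact hran_eq.symm.trans ((h.symm hB).image_projectionL_eq_of_lagrangian hB.neg
      hBij.neg hclosed (by simpa [annSet] using hlag))
  · rw [le_inv_mul_iff₀ hc']
    refine hup _ (hUran v) _ (hdom v.2) ?_
    rw [add_comm, neg_apply, neg_apply, hgraph_iso v, neg_zero]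
  · exact hlow _ (hdom v.2) _ (hUran v) (hgraph_iso v)

/-- In a strong symplectic Banach space with symplectic splitting
`X = X⁺ ⊕ X⁻`, if a closed isotropic subspace `λ` is the graph of the injective operator
`U : dom(U) → X⁻`, `dom(U) ⊆ X⁺`, then `dom(U)` and `ran(U)` are closed; if moreover `λ` is
Lagrangian then `dom(U) = X⁺`, `ran(U) = X⁻`, and `U` is a bounded bijection from `X⁺` onto
`X⁻` with bounded inverse. -/
theorem closed_isotropic_graph_in_strong_space
    {X : Type*} [NormedAddCommGroup X] [NormedSpace ℂ X] [CompleteSpace X]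
    (ω : X → X → ℂ)
    -- ω is linear in the first variable and conjugate linear in the second
    (h1add : ∀ x y z : X, ω (x + y) z = ω x z + ω y z)
    (h1smul : ∀ (c : ℂ) (x y : X), ω (c • x) y = c * ω x y)
    (h2add : ∀ x y z : X, ω x (y + z) = ω x y + ω x z)
    (h2smul : ∀ (c : ℂ) (x y : X), ω x (c • y) = starRingEnd ℂ c * ω x y)
    -- ω is skew-symmetric, non-degenerate and bounded
    (hskew : ∀ x y : X, ω y x = -starRingEnd ℂ (ω x y))
    (hnondeg : ∀ x : X, (∀ y : X, ω x y = 0) → x = 0)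
    (hbound : ∃ C : ℝ, ∀ x y : X, ‖ω x y‖ ≤ C * ‖x‖ * ‖y‖)
    -- ω is strong: every bounded conjugate-linear functional is of the form `ω(x,·)`
    (hstrong : ∀ f : X →SL[starRingEnd ℂ] ℂ, ∃ x : X, ∀ y : X, ω x y = f y)
    -- symplectic splitting X = X⁺ ⊕ X⁻
    (Xp Xm : Submodule ℂ X)
    (hinf : Xp ⊓ Xm = ⊥) (hsup : Xp ⊔ Xm = ⊤)
    (horth : ∀ x ∈ Xp, ∀ y ∈ Xm, ω x y = 0)
    (hpos : ∀ x ∈ Xp, x ≠ 0 → 0 < (-Complex.I * ω x x).re)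
    (hneg : ∀ x ∈ Xm, x ≠ 0 → (-Complex.I * ω x x).re < 0)
    -- λ is a closed isotropic subspace, written as the graph of U
    (lam : Submodule ℂ X)
    (hclosed : IsClosed (lam : Set X))
    (hiso : (lam : Set X) ⊆ annSet ω (lam : Set X))
    (dom : Submodule ℂ X) (U : ↥dom →ₗ[ℂ] X)
    (hdom : dom ≤ Xp) (hUran : ∀ v : ↥dom, U v ∈ Xm) (hUinj : Function.Injective U)
    (hgraph : (lam : Set X) = {z | ∃ v : ↥dom, z = (v : X) + U v}) :
    -- dom(U) and ran(U) are closed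
    IsClosed (dom : Set X) ∧
    IsClosed (Set.range fun v : ↥dom => U v) ∧
    -- if λ is Lagrangian, U is a bounded bijection from X⁺ onto X⁻ with bounded inverse
    ((lam : Set X) = annSet ω (lam : Set X) →
      dom = Xp ∧
      (Set.range fun v : ↥dom => U v) = (Xm : Set X) ∧
      (∃ C : ℝ, ∀ v : ↥dom, ‖U v‖ ≤ C * ‖(v : X)‖) ∧
      (∃ c > (0 : ℝ), ∀ v : ↥dom, c * ‖(v : X)‖ ≤ ‖U v‖)) :=
  closed_isotropic_graph_in_strong_space_general ω h1add h1smul h2add h2smul hskew hnondeg hbound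
    hstrong Xp Xm hinf hsup horth hpos hneg lam hclosed hiso dom U hdom hUran hgraph
end

section
/- Let (X, ω) be a complex symplectic vector space and let λ, μ be isotropic subspaces with dim(λ ∩ μ) < ∞ and dim X/(λ + μ) < ∞ and index(λ, μ) := dim(λ ∩ μ) − dim X/(λ + μ) ≥ 0. Then λ and μ are Lagrangian subspaces of X, index(λ, μ) = 0, (λ + μ)^ω = λ ∩ μ, and (λ + μ)^{ωω} = λ + μ. -/
/-!
Isotropy gives `λ ∩ μ ≤ (λ + μ)^ω`, while nondegeneracy embeds `(λ + μ)^ω` into the coordinates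
of its pairing with a complement of `λ + μ`, so `dim (λ + μ)^ω ≤ codim (λ + μ) ≤ dim (λ ∩ μ)`
and equality holds throughout. The same bound applied to `(λ + μ)^{ωω} ⊇ λ + μ`, whose annihilator
is again `(λ + μ)^ω`, shows that its codimension cannot drop, so `(λ + μ)^{ωω} = λ + μ`. Finally,
if `y ∈ λ^ω ≤ (λ ∩ μ)^ω = λ + μ`, write `y = a + b`; then `b ∈ λ^ω ∩ μ^ω = λ ∩ μ`, so `y ∈ λ`.
-/

/-- The annihilator `λ^ω` of a subspace `λ` with respect to a form `ω` that is additive and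
conjugate-homogeneous in its second variable, as a subspace. -/
def annSub {X : Type*} [AddCommGroup X] [Module ℂ X] (ω : X → X → ℂ)
    (h2add : ∀ x y z : X, ω x (y + z) = ω x y + ω x z)
    (h2smul : ∀ (c : ℂ) (x y : X), ω x (c • y) = starRingEnd ℂ c * ω x y)
    (lam : Submodule ℂ X) : Submodule ℂ X where
  carrier := {y | ∀ x ∈ lam, ω x y = 0}
  add_mem' := by
    intro a b ha hb x hx
    rw [h2add, ha x hx, hb x hx, add_zero]
  zero_mem' := by
    intro x _
    have h := h2add x 0 0
    rw [add_zero] at h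
    exact left_eq_add.mp h
  smul_mem' := by
    intro c a ha x hx
    rw [h2smul, ha x hx, mul_zero]

open Module

namespace Submodule

theorem eq_of_le_of_finrank_quotient_le {K V : Type*} [Field K] [AddCommGroup V] [Module K V]
    {S₁ S₂ : Submodule K V} [FiniteDimensional K (V ⧸ S₁)] (hle : S₁ ≤ S₂)
    (h : finrank K (V ⧸ S₁) ≤ finrank K (V ⧸ S₂)) : S₁ = S₂ := by
  have hsurj := factor_surjective hle
  have : FiniteDimensional K (V ⧸ S₂) := Module.Finite.of_surjective _ hsurj
  have hinj : Function.Injective (factor hle) :=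
    (LinearMap.injective_iff_surjective_of_finrank_eq_finrank
      (le_antisymm h (LinearMap.finrank_le_finrank_of_surjective hsurj))).mpr hsurj
  refine le_antisymm hle fun x hx => ?_
  rw [← Quotient.mk_eq_zero]
  exact hinj (by rwa [map_zero, ← mkQ_apply, factor_mk, mkQ_apply, Quotient.mk_eq_zero])

variable {R M : Type*} [CommRing R] [AddCommGroup M] [Module R M] {I₁ I₂ : R →+* R}
  {B : M →ₛₗ[I₁] M →ₛₗ[I₂] R}

theorem orthogonalBilin_sup (S T : Submodule R M) :
    (S ⊔ T).orthogonalBilin B = S.orthogonalBilin B ⊓ T.orthogonalBilin B := by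
  refine le_antisymm (le_inf (orthogonalBilin_le le_sup_left) (orthogonalBilin_le le_sup_right)) ?_
  rintro y ⟨hS, hT⟩ x hx
  obtain ⟨s, hs, t, ht, rfl⟩ := mem_sup.mp hx
  rw [map_add, LinearMap.add_apply, hS s hs, hT t ht, add_zero]

theorem inf_le_orthogonalBilin_sup {S T : Submodule R M} (hS : S ≤ S.orthogonalBilin B)
    (hT : T ≤ T.orthogonalBilin B) : S ⊓ T ≤ (S ⊔ T).orthogonalBilin B :=
  orthogonalBilin_sup S T ▸ inf_le_inf hS hT

theorem orthogonalBilin_eq_self_of_isotropic {S T : Submodule R M}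
    (hS : S ≤ S.orthogonalBilin B) (hT : T ≤ T.orthogonalBilin B)
    (hperp : (S ⊔ T).orthogonalBilin B ≤ S ⊓ T) (hsup : (S ⊓ T).orthogonalBilin B ≤ S ⊔ T) :
    S.orthogonalBilin B = S := by
  refine le_antisymm (fun y hy => ?_) hS
  obtain ⟨a, ha, b, hb, rfl⟩ := mem_sup.mp (hsup (orthogonalBilin_le inf_le_left hy))
  have hbS : b ∈ S.orthogonalBilin B := by
    simpa using sub_mem hy (hS ha)
  have hbST : b ∈ (S ⊔ T).orthogonalBilin B := by
    rw [orthogonalBilin_sup]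
    exact ⟨hbS, hT hb⟩
  exact add_mem ha (hperp hbST).1

end Submodule

namespace LinearMap

variable {K M : Type*} [Field K] [AddCommGroup M] [Module K M] {σ : K →+* K}
  {B : M →ₗ[K] M →ₛₗ[σ] K}

theorem exists_injective_orthogonalBilin_to_fun (hB : B.IsRefl) (hsep : B.SeparatingLeft)
    (W : Submodule K M) [FiniteDimensional K (M ⧸ W)] :
    ∃ f : W.orthogonalBilin B →ₗ[K] (Fin (finrank K (M ⧸ W)) → K), Function.Injective f := by
  obtain ⟨C, hWC⟩ := W.exists_isCompl
  let e : Basis (Fin (finrank K (M ⧸ W))) K C :=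
    (finBasis K (M ⧸ W)).map (W.quotientEquivOfIsCompl C hWC)
  refine ⟨(pi fun i => B.flip (e i)).domRestrict _, injective_iff_map_eq_zero _ |>.mpr ?_⟩
  rintro ⟨y, hy⟩ hy0
  have hC : C ≤ ker (B y) := by
    have hzero : (B y).domRestrict C = 0 :=
      e.ext fun i => by simpa using congrFun hy0 i
    exact fun c hc => by simpa using LinearMap.congr_fun hzero ⟨c, hc⟩
  have hW : W ≤ ker (B y) := fun w hw => hB _ _ (hy w hw)
  have hker : ker (B y) = ⊤ := top_le_iff.mp (hWC.sup_eq_top ▸ sup_le hW hC)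
  exact Subtype.ext (hsep y fun z => by simpa using LinearMap.congr_fun (ker_eq_top.mp hker) z)

theorem finiteDimensional_orthogonalBilin (hB : B.IsRefl) (hsep : B.SeparatingLeft)
    (W : Submodule K M) [FiniteDimensional K (M ⧸ W)] :
    FiniteDimensional K (W.orthogonalBilin B) :=
  have ⟨_, hf⟩ := exists_injective_orthogonalBilin_to_fun hB hsep W
  .of_injective _ hf

theorem finrank_orthogonalBilin_le (hB : B.IsRefl) (hsep : B.SeparatingLeft)
    (W : Submodule K M) [FiniteDimensional K (M ⧸ W)] :
    finrank K (W.orthogonalBilin B) ≤ finrank K (M ⧸ W) := by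
  have := finiteDimensional_orthogonalBilin hB hsep W
  obtain ⟨f, hf⟩ := exists_injective_orthogonalBilin_to_fun hB hsep W
  simpa using finrank_le_finrank_of_injective hf

theorem orthogonalBilin_orthogonalBilin_eq (hB : B.IsRefl) (hsep : B.SeparatingLeft)
    {W : Submodule K M} [FiniteDimensional K (M ⧸ W)]
    (h : finrank K (M ⧸ W) ≤ finrank K (W.orthogonalBilin B)) :
    (W.orthogonalBilin B).orthogonalBilin B = W := by
  set U := (W.orthogonalBilin B).orthogonalBilin B
  have hWU : W ≤ U := Submodule.le_orthogonalBilin_orthogonalBilin hB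
  have hU : U.orthogonalBilin B = W.orthogonalBilin B :=
    le_antisymm (Submodule.orthogonalBilin_le hWU) (Submodule.le_orthogonalBilin_orthogonalBilin hB)
  have : FiniteDimensional K (M ⧸ U) := .of_surjective _ (Submodule.factor_surjective hWU)
  refine (Submodule.eq_of_le_of_finrank_quotient_le hWU ?_).symm
  calc finrank K (M ⧸ W) ≤ finrank K (W.orthogonalBilin B) := h
    _ = finrank K (U.orthogonalBilin B) := by rw [hU]
    _ ≤ finrank K (M ⧸ U) := finrank_orthogonalBilin_le hB hsep U

end LinearMap

theorem isotropic_fredholm_pair_nonneg_index_general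
    {X : Type*} [AddCommGroup X] [Module ℂ X]
    (ω : X → X → ℂ)
    (h1add : ∀ x y z : X, ω (x + y) z = ω x z + ω y z)
    (h1smul : ∀ (c : ℂ) (x y : X), ω (c • x) y = c * ω x y)
    (h2add : ∀ x y z : X, ω x (y + z) = ω x y + ω x z)
    (h2smul : ∀ (c : ℂ) (x y : X), ω x (c • y) = starRingEnd ℂ c * ω x y)
    (hskew : ∀ x y : X, ω y x = -starRingEnd ℂ (ω x y))
    (hnondeg : ∀ x : X, (∀ y : X, ω x y = 0) → x = 0)
    (lam mu : Submodule ℂ X)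
    -- λ and μ are isotropic
    (hlamiso : lam ≤ annSub ω h2add h2smul lam)
    (hmuiso : mu ≤ annSub ω h2add h2smul mu)
    -- (λ, μ) is an algebraic Fredholm pair of non-negative index
    (hfin₂ : FiniteDimensional ℂ (X ⧸ (lam ⊔ mu)))
    (hidx : Module.finrank ℂ (X ⧸ (lam ⊔ mu)) ≤ Module.finrank ℂ ↥(lam ⊓ mu)) :
    -- λ and μ are Lagrangian
    lam = annSub ω h2add h2smul lam ∧
    mu = annSub ω h2add h2smul mu ∧
    -- index(λ, μ) = 0
    Module.finrank ℂ ↥(lam ⊓ mu) = Module.finrank ℂ (X ⧸ (lam ⊔ mu)) ∧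
    -- (λ+μ)^ω = λ ∩ μ
    annSub ω h2add h2smul (lam ⊔ mu) = lam ⊓ mu ∧
    -- (λ+μ)^{ωω} = λ + μ
    annSub ω h2add h2smul (annSub ω h2add h2smul (lam ⊔ mu)) = lam ⊔ mu := by
  set B : X →ₗ[ℂ] X →ₗ⋆[ℂ] ℂ := LinearMap.mk₂'ₛₗ _ _ ω h1add h1smul h2add h2smul
  have hann : ∀ p, annSub ω h2add h2smul p = p.orthogonalBilin B := fun _ => rfl
  have hB : B.IsRefl := fun x y h => by
    simp only [B, LinearMap.mk₂'ₛₗ_apply] at h ⊢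
    rw [hskew, h, map_zero, neg_zero]
  have hsep : B.SeparatingLeft := hnondeg
  simp only [hann] at hlamiso hmuiso ⊢
  have := LinearMap.finiteDimensional_orthogonalBilin hB hsep (lam ⊔ mu)
  have hperp : (lam ⊔ mu).orthogonalBilin B = lam ⊓ mu :=
    (Submodule.eq_of_le_of_finrank_le (Submodule.inf_le_orthogonalBilin_sup hlamiso hmuiso)
      ((LinearMap.finrank_orthogonalBilin_le hB hsep _).trans hidx)).symm
  have hbiperp := LinearMap.orthogonalBilin_orthogonalBilin_eq hB hsep (hperp ▸ hidx)
  have hsup : (lam ⊓ mu).orthogonalBilin B = lam ⊔ mu := hperp ▸ hbiperp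
  refine ⟨?_, ?_, le_antisymm (hperp ▸ LinearMap.finrank_orthogonalBilin_le hB hsep _) hidx,
    hperp, hbiperp⟩
  · exact (Submodule.orthogonalBilin_eq_self_of_isotropic hlamiso hmuiso hperp.le hsup.le).symm
  · rw [sup_comm, inf_comm] at hperp hsup
    exact (Submodule.orthogonalBilin_eq_self_of_isotropic hmuiso hlamiso hperp.le hsup.le).symm

/-- Let `(λ, μ)` be an algebraic Fredholm pair of isotropic subspaces of a
complex symplectic vector space with `index(λ,μ) ≥ 0`. Then `λ` and `μ` are Lagrangian,
`index(λ,μ) = 0`, `(λ+μ)^ω = λ ∩ μ` and `(λ+μ)^{ωω} = λ + μ`. -/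
theorem isotropic_fredholm_pair_nonneg_index
    {X : Type*} [AddCommGroup X] [Module ℂ X]
    (ω : X → X → ℂ)
    (h1add : ∀ x y z : X, ω (x + y) z = ω x z + ω y z)
    (h1smul : ∀ (c : ℂ) (x y : X), ω (c • x) y = c * ω x y)
    (h2add : ∀ x y z : X, ω x (y + z) = ω x y + ω x z)
    (h2smul : ∀ (c : ℂ) (x y : X), ω x (c • y) = starRingEnd ℂ c * ω x y)
    (hskew : ∀ x y : X, ω y x = -starRingEnd ℂ (ω x y))
    (hnondeg : ∀ x : X, (∀ y : X, ω x y = 0) → x = 0)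
    (lam mu : Submodule ℂ X)
    -- λ and μ are isotropic
    (hlamiso : lam ≤ annSub ω h2add h2smul lam)
    (hmuiso : mu ≤ annSub ω h2add h2smul mu)
    -- (λ, μ) is an algebraic Fredholm pair of non-negative index
    (hfin₁ : FiniteDimensional ℂ ↥(lam ⊓ mu))
    (hfin₂ : FiniteDimensional ℂ (X ⧸ (lam ⊔ mu)))
    (hidx : Module.finrank ℂ (X ⧸ (lam ⊔ mu)) ≤ Module.finrank ℂ ↥(lam ⊓ mu)) :
    -- λ and μ are Lagrangian
    lam = annSub ω h2add h2smul lam ∧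
    mu = annSub ω h2add h2smul mu ∧
    -- index(λ, μ) = 0
    Module.finrank ℂ ↥(lam ⊓ mu) = Module.finrank ℂ (X ⧸ (lam ⊔ mu)) ∧
    -- (λ+μ)^ω = λ ∩ μ
    annSub ω h2add h2smul (lam ⊔ mu) = lam ⊓ mu ∧
    -- (λ+μ)^{ωω} = λ + μ
    annSub ω h2add h2smul (annSub ω h2add h2smul (lam ⊔ mu)) = lam ⊔ mu :=
  isotropic_fredholm_pair_nonneg_index_general ω h1add h1smul h2add h2smul hskew hnondeg lam mu
    hlamiso hmuiso hfin₂ hidx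
end

section
/- Let (X, ω) be a symplectic Banach space with a symplectic splitting X = X⁺ ⊕ X⁻, and let V : X⁺ → X⁻ be a bounded operator with bounded inverse such that the graph μ := {x + Vx : x ∈ X⁺} is an isotropic subspace of X. Then μ is a Lagrangian subspace of X. -/
/-!
Decompose `y ∈ μ^ω` as `y = p + V q` with `p, q ∈ X⁺`, which is possible because `V` maps onto
`X⁻`. Since `q + V q ∈ μ ⊆ μ^ω`, also `d := p - q = y - (q + V q)` annihilates `μ`. Pairing `d`
with `a + V a` and using `ω(V a, d) = 0` gives `ω(a, d) = 0` on `X⁺`, while `ω(X⁻, d) = 0` by the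
orthogonality of the splitting. Hence `d` annihilates `X⁺ ⊕ X⁻ = X`, so `d = 0` by
non-degeneracy and `y = q + V q ∈ μ`.
-/

theorem form_eq_zero_symm_of_skew {X R : Type*} [CommRing R] [StarRing R]
    {ω : X → X → R} (hskew : ∀ x y : X, ω y x = -starRingEnd R (ω x y)) {x y : X}
    (h : ω x y = 0) : ω y x = 0 := by
  rw [hskew, h, map_zero, neg_zero]

section Graph

variable {𝕜 X : Type*} [Ring 𝕜] [AddCommGroup X] [Module 𝕜 X] {P M : Submodule 𝕜 X}
  {ω : X → X → ℂ}

def internalGraph (V : P →ₗ[𝕜] X) : Set X :=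
  {z | ∃ x : P, z = x + V x}

theorem sub_mem_annSet (h2add : ∀ x y z : X, ω x (y + z) = ω x y + ω x z)
    {S : Set X} {y w : X} (hy : y ∈ annSet ω S) (hw : w ∈ annSet ω S) :
    y - w ∈ annSet ω S := by
  intro x hx
  have hsplit : ω x (y - w) + ω x w = ω x y := by rw [← h2add, sub_add_cancel]
  rwa [hy x hx, hw x hx, add_zero] at hsplit

theorem forall_form_eq_zero_of_sup_eq_top
    (h1add : ∀ x y z : X, ω (x + y) z = ω x z + ω y z) (hsup : P ⊔ M = ⊤) {d : X}
    (hP : ∀ a ∈ P, ω a d = 0) (hM : ∀ b ∈ M, ω b d = 0) (z : X) : ω z d = 0 := by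
  obtain ⟨a, ha, b, hb, rfl⟩ := Submodule.mem_sup.mp (hsup ▸ Submodule.mem_top : z ∈ P ⊔ M)
  rw [h1add, hP a ha, hM b hb, add_zero]

theorem eq_zero_of_mem_annSet_internalGraph
    (h1add : ∀ x y z : X, ω (x + y) z = ω x z + ω y z)
    (hrefl : ∀ x y : X, ω x y = 0 → ω y x = 0) (hnondeg : ∀ x : X, (∀ y : X, ω x y = 0) → x = 0)
    (hsup : P ⊔ M = ⊤) (horth : ∀ x ∈ P, ∀ y ∈ M, ω x y = 0) {V : P →ₗ[𝕜] X}
    (hVm : ∀ x : P, V x ∈ M) {d : X} (hdP : d ∈ P) (hd : d ∈ annSet ω (internalGraph V)) :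
    d = 0 := by
  have hM : ∀ b ∈ M, ω b d = 0 := fun b hb => hrefl _ _ (horth d hdP b hb)
  have hP : ∀ a ∈ P, ω a d = 0 := fun a ha => by
    have h := hd _ ⟨⟨a, ha⟩, rfl⟩
    rwa [h1add, hM _ (hVm _), add_zero] at h
  exact hnondeg d fun z => hrefl _ _ (forall_form_eq_zero_of_sup_eq_top h1add hsup hP hM z)

theorem annSet_internalGraph_subset
    (h1add : ∀ x y z : X, ω (x + y) z = ω x z + ω y z)
    (h2add : ∀ x y z : X, ω x (y + z) = ω x y + ω x z)
    (hrefl : ∀ x y : X, ω x y = 0 → ω y x = 0) (hnondeg : ∀ x : X, (∀ y : X, ω x y = 0) → x = 0)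
    (hsup : P ⊔ M = ⊤) (horth : ∀ x ∈ P, ∀ y ∈ M, ω x y = 0) {V : P →ₗ[𝕜] X}
    (hVm : ∀ x : P, V x ∈ M) (hVsurj : ∀ y ∈ M, ∃ x : P, V x = y)
    (hiso : internalGraph V ⊆ annSet ω (internalGraph V)) :
    annSet ω (internalGraph V) ⊆ internalGraph V := by
  intro y hy
  obtain ⟨p, hp, m, hm, rfl⟩ := Submodule.mem_sup.mp (hsup ▸ Submodule.mem_top : y ∈ P ⊔ M)
  obtain ⟨q, rfl⟩ := hVsurj m hm
  have hd : p - q ∈ annSet ω (internalGraph V) := by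
    simpa only [add_sub_add_right_eq_sub] using sub_mem_annSet h2add hy (hiso ⟨q, rfl⟩)
  have hpq := eq_zero_of_mem_annSet_internalGraph h1add hrefl hnondeg hsup horth hVm
    (P.sub_mem hp q.2) hd
  exact ⟨q, by rw [sub_eq_zero.mp hpq]⟩

end Graph

theorem graph_of_bounded_invertible_is_lagrangian_general
    {X : Type*} [NormedAddCommGroup X] [NormedSpace ℂ X]
    (ω : X → X → ℂ)
    -- ω is linear in the first variable and conjugate linear in the second
    (h1add : ∀ x y z : X, ω (x + y) z = ω x z + ω y z)
    (h2add : ∀ x y z : X, ω x (y + z) = ω x y + ω x z)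
    -- ω is skew-symmetric, non-degenerate and bounded
    (hskew : ∀ x y : X, ω y x = -starRingEnd ℂ (ω x y))
    (hnondeg : ∀ x : X, (∀ y : X, ω x y = 0) → x = 0)
    -- symplectic splitting X = X⁺ ⊕ X⁻
    (Xp Xm : Submodule ℂ X)
    (hsup : Xp ⊔ Xm = ⊤)
    (horth : ∀ x ∈ Xp, ∀ y ∈ Xm, ω x y = 0)
    -- V : X⁺ → X⁻ is bounded with bounded inverse
    (V : ↥Xp →ₗ[ℂ] X)
    (hVm : ∀ x : ↥Xp, V x ∈ Xm)
    (hVsurj : ∀ y ∈ Xm, ∃ x : ↥Xp, V x = y)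
    -- the graph μ of V is isotropic
    (hiso : {z : X | ∃ x : ↥Xp, z = (x : X) + V x} ⊆
      annSet ω {z : X | ∃ x : ↥Xp, z = (x : X) + V x}) :
    -- then μ is Lagrangian
    {z : X | ∃ x : ↥Xp, z = (x : X) + V x} =
      annSet ω {z : X | ∃ x : ↥Xp, z = (x : X) + V x} :=
  hiso.antisymm <| annSet_internalGraph_subset h1add h2add
    (fun _ _ => form_eq_zero_symm_of_skew hskew) hnondeg hsup horth hVm hVsurj hiso

/-- In a symplectic Banach space with symplectic splitting `X = X⁺ ⊕ X⁻`,
if `V : X⁺ → X⁻` is a bounded operator with bounded inverse whose graph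
`μ = {x + Vx : x ∈ X⁺}` is isotropic, then `μ` is Lagrangian. -/
theorem graph_of_bounded_invertible_is_lagrangian
    {X : Type*} [NormedAddCommGroup X] [NormedSpace ℂ X] [CompleteSpace X]
    (ω : X → X → ℂ)
    -- ω is linear in the first variable and conjugate linear in the second
    (h1add : ∀ x y z : X, ω (x + y) z = ω x z + ω y z)
    (h1smul : ∀ (c : ℂ) (x y : X), ω (c • x) y = c * ω x y)
    (h2add : ∀ x y z : X, ω x (y + z) = ω x y + ω x z)
    (h2smul : ∀ (c : ℂ) (x y : X), ω x (c • y) = starRingEnd ℂ c * ω x y)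
    -- ω is skew-symmetric, non-degenerate and bounded
    (hskew : ∀ x y : X, ω y x = -starRingEnd ℂ (ω x y))
    (hnondeg : ∀ x : X, (∀ y : X, ω x y = 0) → x = 0)
    (hbound : ∃ C : ℝ, ∀ x y : X, ‖ω x y‖ ≤ C * ‖x‖ * ‖y‖)
    -- symplectic splitting X = X⁺ ⊕ X⁻
    (Xp Xm : Submodule ℂ X)
    (hinf : Xp ⊓ Xm = ⊥) (hsup : Xp ⊔ Xm = ⊤)
    (horth : ∀ x ∈ Xp, ∀ y ∈ Xm, ω x y = 0)
    (hpos : ∀ x ∈ Xp, x ≠ 0 → 0 < (-Complex.I * ω x x).re)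
    (hneg : ∀ x ∈ Xm, x ≠ 0 → (-Complex.I * ω x x).re < 0)
    -- V : X⁺ → X⁻ is bounded with bounded inverse
    (V : ↥Xp →ₗ[ℂ] X)
    (hVm : ∀ x : ↥Xp, V x ∈ Xm)
    (hVbdd : ∃ C : ℝ, ∀ x : ↥Xp, ‖V x‖ ≤ C * ‖(x : X)‖)
    (hVsurj : ∀ y ∈ Xm, ∃ x : ↥Xp, V x = y)
    (hVinvbdd : ∃ c > (0 : ℝ), ∀ x : ↥Xp, c * ‖(x : X)‖ ≤ ‖V x‖)
    -- the graph μ of V is isotropic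
    (hiso : {z : X | ∃ x : ↥Xp, z = (x : X) + V x} ⊆
      annSet ω {z : X | ∃ x : ↥Xp, z = (x : X) + V x}) :
    -- then μ is Lagrangian
    {z : X | ∃ x : ↥Xp, z = (x : X) + V x} =
      annSet ω {z : X | ∃ x : ↥Xp, z = (x : X) + V x} :=
  graph_of_bounded_invertible_is_lagrangian_general ω h1add h2add hskew hnondeg Xp Xm hsup horth V
    hVm hVsurj hiso
end

section
/- Let X be a complex Banach space equipped with a bounded inner product h, and let A : X → X be a bounded linear operator that is unitary with respect to h (h(Ax,Ay) = h(x,y) for all x,y ∈ X) and such that A − I is Fredholm of index 0. Then there exists ε > 0 such that every spectral point z ∈ σ(A) with |z − 1| ≤ ε equals 1 (so 1 is not an accumulation point of the spectrum of A), and moreover ker((A − I)²) = ker(A − I). -/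
/-- A bounded inner product on a complex Banach space: additive and ℂ-homogeneous in the
first argument, conjugate-symmetric, positive definite, and bounded. -/
def IsBoundedInnerProduct {X : Type*} [NormedAddCommGroup X] [NormedSpace ℂ X]
    (h : X → X → ℂ) : Prop :=
  (∀ x y z : X, h (x + y) z = h x z + h y z) ∧
  (∀ (c : ℂ) (x y : X), h (c • x) y = c * h x y) ∧
  (∀ x y : X, h y x = starRingEnd ℂ (h x y)) ∧
  (∀ x : X, x ≠ 0 → 0 < (h x x).re) ∧
  (∃ C : ℝ, ∀ x y : X, ‖h x y‖ ≤ C * ‖x‖ * ‖y‖)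

/-!
Since `A` preserves `h`, every `x` fixed by `A` satisfies
`h (A y - y) x = h (A y) (A x) - h y x = 0`, so `ker (A - 1)` is `h`-orthogonal to
`ran (A - 1)`; by definiteness the two meet only in `0`. Index zero turns this disjointness
into `X = ker (A - 1) ⊕ ran (A - 1)`. Both summands are invariant, `A - 1` vanishes on the
first and is invertible on the second (a Banach space, the range being closed), so
`σ(A - 1) ⊆ {0} ∪ σ((A - 1)|ran)`, and the latter is closed and misses `0`.
-/

open Function LinearMap Module Topology

section Ring

variable {R M : Type*} [Ring R] [AddCommGroup M] [Module R M]

theorem LinearMap.ker_comp_self_eq_ker_of_disjoint {f : M →ₗ[R] M}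
    (hf : Disjoint (ker f) (range f)) : ker (f ∘ₗ f) = ker f :=
  le_antisymm (fun x hx => Submodule.disjoint_def.mp hf (f x) hx (mem_range_self f x))
    (ker_le_ker_comp f f)

theorem LinearMap.range_sub_one_orthogonal_ker_sub_one {G : Type*} [AddCommGroup G]
    {h : M → M → G}
    (hadd : ∀ x y z, h (x + y) z = h x z + h y z) {A : M →ₗ[R] M}
    (hA : ∀ x y, h (A x) (A y) = h x y) (y : M) {x : M} (hx : x ∈ ker (A - 1)) :
    h ((A - 1) y) x = 0 := by
  have hfix : A x = x := by simpa [sub_eq_zero] using hx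
  calc h ((A - 1) y) x = h (A y) (A x) - h y x := by
        rw [hfix, sub_apply, Module.End.one_apply]
        exact (AddMonoidHom.mk' (h · x) (hadd · · x)).map_sub _ _
    _ = 0 := by rw [hA, sub_self]

theorem LinearMap.disjoint_ker_sub_one_range_sub_one {G : Type*} [AddCommGroup G]
    {h : M → M → G} (hadd : ∀ x y z, h (x + y) z = h x z + h y z)
    (hanis : ∀ x, h x x = 0 → x = 0) {A : M →ₗ[R] M} (hA : ∀ x y, h (A x) (A y) = h x y) :
    Disjoint (ker (A - 1)) (range (A - 1)) := by
  rw [Submodule.disjoint_def]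
  rintro _ hx ⟨y, rfl⟩
  exact hanis _ (range_sub_one_orthogonal_ker_sub_one hadd hA y hx)

theorem LinearMap.bijective_of_isCompl {p q : Submodule R M} (hpq : IsCompl p q) {f : M →ₗ[R] M}
    (hp : ∀ x ∈ p, f x ∈ p) (hq : ∀ x ∈ q, f x ∈ q)
    (hfp : Bijective (f.restrict hp)) (hfq : Bijective (f.restrict hq)) : Bijective f := by
  let e := Submodule.prodEquivOfIsCompl p q hpq
  have hconj : f ∘ e = e ∘ Prod.map (f.restrict hp) (f.restrict hq) := by
    ext ⟨x, y⟩
    simp [e, Submodule.coe_prodEquivOfIsCompl']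
  rw [← Bijective.of_comp_iff f e.bijective, hconj]
  exact e.bijective.comp (hfp.prodMap hfq)

theorem LinearMap.bijective_restrict_range_of_isCompl {f : M →ₗ[R] M}
    (hf : IsCompl (ker f) (range f)) :
    Bijective (f.restrict fun x _ => mem_range_self f x : range f →ₗ[R] range f) := by
  refine ⟨(injective_iff_map_eq_zero _).mpr fun x hx => ?_, ?_⟩
  · exact Subtype.ext (Submodule.disjoint_def.mp hf.disjoint x (congrArg Subtype.val hx) x.2)
  · rintro ⟨_, x, rfl⟩
    obtain ⟨n, hn, r, hr, rfl⟩ :=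
      Submodule.mem_sup.mp (hf.sup_eq_top ▸ Submodule.mem_top (x := x))
    exact ⟨⟨r, hr⟩, Subtype.ext (by simp [mem_ker.mp hn])⟩

end Ring

theorem Submodule.isCompl_of_disjoint_of_finrank_eq {K M : Type*} [DivisionRing K]
    [AddCommGroup M] [Module K M] {p q : Submodule K M} [FiniteDimensional K p]
    [FiniteDimensional K (M ⧸ q)] (hpq : Disjoint p q)
    (hrank : finrank K p = finrank K (M ⧸ q)) :
    IsCompl p q := by
  have hinj : Injective (q.mkQ ∘ₗ p.subtype) := by
    rw [← ker_eq_bot, ker_comp, ker_mkQ, ← disjoint_iff_comap_eq_bot]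
    exact hpq
  have hsurj := (injective_iff_surjective_of_finrank_eq_finrank hrank).mp hinj
  refine ⟨hpq, codisjoint_iff.mpr ?_⟩
  rw [sup_comm, ← comap_map_mkQ, ← range_subtype p, ← range_comp, range_eq_top.mpr hsurj,
    comap_top]

section Field

variable {K M : Type*} [Field K] [AddCommGroup M] [Module K M]

theorem spectrum.zero_subset_singleton_zero {A : Type*} [Ring A] [Algebra K A] :
    spectrum K (0 : A) ⊆ {0} := by
  rcases subsingleton_or_nontrivial A with _ | _
  · simp [spectrum.of_subsingleton]
  · simp [spectrum.zero_eq]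

theorem Module.End.spectrum_subset_union_of_isCompl {p q : Submodule K M} (hpq : IsCompl p q)
    {f : End K M} (hp : ∀ x ∈ p, f x ∈ p) (hq : ∀ x ∈ q, f x ∈ q) :
    spectrum K f ⊆ spectrum K (f.restrict hp) ∪ spectrum K (f.restrict hq) := by
  intro c hc
  contrapose! hc
  obtain ⟨hcp, hcq⟩ := not_or.mp hc
  have hinv : ∀ {s : Submodule K M} (hs : ∀ x ∈ s, f x ∈ s),
      ∀ x ∈ s, (algebraMap K (End K M) c - f) x ∈ s := fun {s} hs x hx => by
    simpa using sub_mem (s.smul_mem c hx) (hs x hx)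
  have hrestrict : ∀ {s : Submodule K M} (hs : ∀ x ∈ s, f x ∈ s),
      (algebraMap K (End K M) c - f).restrict (hinv hs) =
        algebraMap K (End K s) c - f.restrict hs :=
    fun hs => by ext; simp
  rw [spectrum.notMem_iff, End.isUnit_iff]
  refine bijective_of_isCompl hpq (hinv hp) (hinv hq) ?_ ?_
  · rw [hrestrict hp, ← End.isUnit_iff]
    exact spectrum.notMem_iff.mp hcp
  · rw [hrestrict hq, ← End.isUnit_iff]
    exact spectrum.notMem_iff.mp hcq

theorem Module.End.spectrum_subset_insert_zero_of_isCompl {f : End K M}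
    (hf : IsCompl (ker f) (range f)) :
    spectrum K f ⊆
      insert 0 (spectrum K (f.restrict fun x _ => mem_range_self f x : End K (range f))) := by
  have hker : ∀ x ∈ ker f, f x ∈ ker f := fun x hx => by simp [mem_ker.mp hx]
  have hzero : f.restrict hker = 0 := by
    ext x
    simp
  calc spectrum K f ⊆ spectrum K (f.restrict hker) ∪ spectrum K (f.restrict _) :=
        spectrum_subset_union_of_isCompl hf hker _
    _ ⊆ insert 0 (spectrum K (f.restrict _)) := by
        rw [hzero, Set.insert_eq]
        exact Set.union_subset_union_left _ spectrum.zero_subset_singleton_zero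

end Field

theorem ContinuousLinearMap.eventually_mem_spectrum_imp_eq_zero {𝕜 E : Type*}
    [NontriviallyNormedField 𝕜] [NormedAddCommGroup E] [NormedSpace 𝕜 E] [CompleteSpace E]
    {T : E →L[𝕜] E} (hclosed : IsClosed (T.range : Set E)) (hT : IsCompl T.ker T.range) :
    ∀ᶠ c in 𝓝 (0 : 𝕜), c ∈ spectrum 𝕜 T → c = 0 := by
  have : CompleteSpace T.range := hclosed.completeSpace_coe
  let S : T.range →L[𝕜] T.range := T.restrict fun x _ => ⟨x, rfl⟩
  have hS : IsUnit S := S.isUnit_iff_bijective.mpr (bijective_restrict_range_of_isCompl hT)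
  have hnear : ∀ᶠ c in 𝓝 (0 : 𝕜), c ∉ spectrum 𝕜 S :=
    (spectrum.isClosed S).isOpen_compl.mem_nhds ((spectrum.zero_notMem_iff 𝕜).mpr hS)
  filter_upwards [hnear] with c hcS hc
  rw [spectrum_eq] at hc hcS
  exact (End.spectrum_subset_insert_zero_of_isCompl hT hc).resolve_right hcS

/-- Let `A` be a bounded operator on a complex Banach space `X`, unitary with
respect to a bounded inner product `h`, with `A - I` Fredholm of index `0`. Then `1` is not
an accumulation point of `σ(A)` (all spectral points close enough to `1` equal `1`), and
`ker((A - I)²) = ker(A - I)` (the eigenvalue `1` has algebraic multiplicity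
`dim ker(A - I)`). -/
theorem h_unitary_isolated_spectrum_near_one
    {X : Type*} [NormedAddCommGroup X] [NormedSpace ℂ X] [CompleteSpace X]
    (h : X → X → ℂ) (hh : IsBoundedInnerProduct h)
    (A : X →L[ℂ] X)
    -- A is unitary with respect to h
    (hAunit : ∀ x y : X, h (A x) (A y) = h x y)
    -- A - I is Fredholm of index 0
    (hker : FiniteDimensional ℂ ↥(LinearMap.ker ((A - 1 : X →L[ℂ] X) : X →ₗ[ℂ] X)))
    (hran : IsClosed ((LinearMap.range ((A - 1 : X →L[ℂ] X) : X →ₗ[ℂ] X) : Submodule ℂ X) : Set X))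
    (hcoker : FiniteDimensional ℂ (X ⧸ LinearMap.range ((A - 1 : X →L[ℂ] X) : X →ₗ[ℂ] X)))
    (hindex : Module.finrank ℂ ↥(LinearMap.ker ((A - 1 : X →L[ℂ] X) : X →ₗ[ℂ] X)) =
      Module.finrank ℂ (X ⧸ LinearMap.range ((A - 1 : X →L[ℂ] X) : X →ₗ[ℂ] X))) :
    (∃ ε > (0 : ℝ), ∀ z ∈ spectrum ℂ A, ‖z - 1‖ ≤ ε → z = 1) ∧
    LinearMap.ker ((((A - 1).comp (A - 1) : X →L[ℂ] X)) : X →ₗ[ℂ] X) = LinearMap.ker ((A - 1 : X →L[ℂ] X) : X →ₗ[ℂ] X) := by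
  obtain ⟨hadd, -, -, hpos, -⟩ := hh
  have hanis : ∀ x, h x x = 0 → x = 0 := fun x hx =>
    by_contra fun hx0 => by simpa [hx] using hpos x hx0
  have hdisj : Disjoint (A - 1 : X →L[ℂ] X).ker (A - 1 : X →L[ℂ] X).range :=
    disjoint_ker_sub_one_range_sub_one hadd hanis (A := (A : X →ₗ[ℂ] X)) hAunit
  have hcompl := Submodule.isCompl_of_disjoint_of_finrank_eq hdisj hindex
  refine ⟨?_, ker_comp_self_eq_ker_of_disjoint hdisj⟩
  obtain ⟨ε, hε, hsmall⟩ :=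
    Metric.eventually_nhds_iff.mp ((A - 1).eventually_mem_spectrum_imp_eq_zero hran hcompl)
  refine ⟨ε / 2, half_pos hε, fun z hz hzε => sub_eq_zero.mp (hsmall ?_ ?_)⟩
  · rw [dist_zero_right]
    linarith
  · rw [← map_one (algebraMap ℂ (X →L[ℂ] X)), ← spectrum.sub_singleton_eq]
    exact Set.sub_mem_sub hz rfl
end

section
/- Let X be a Hilbert space and M, N subspaces with dim M = dim N = n, where n is a positive integer. Let δ ≥ 0 be such that every y ∈ N with ‖y‖ = 1 satisfies dist(y, M) ≤ δ, and assume √n·δ < 1. Then every x ∈ M with ‖x‖ = 1 satisfies dist(x, N) ≤ (√n·δ)/(1 − √n·δ). -/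
/-!
Let `P` be the orthogonal projection onto `M`. The hypothesis says `‖y - P y‖ ≤ δ ‖y‖` on `N`,
so for `δ < 1` the map `P : N → M` is injective, hence bijective since `dim N = dim M`. Given a
unit vector `x ∈ M`, pick `y ∈ N` with `P y = x`; then `‖y‖ ≤ 1 + δ ‖y‖` and
`dist(x, N) ≤ ‖y - x‖ ≤ δ ‖y‖ ≤ δ / (1 - δ) ≤ √n δ / (1 - √n δ)`.
-/

open Metric

namespace Submodule

variable {𝕜 E : Type*} [RCLike 𝕜] [NormedAddCommGroup E] [InnerProductSpace 𝕜 E]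

theorem infDist_eq_norm_sub_starProjection (K : Submodule 𝕜 E) [K.HasOrthogonalProjection]
    (u : E) : infDist u (K : Set E) = ‖u - K.starProjection u‖ := by
  rw [infDist_eq_iInf, starProjection_minimal]
  simp only [dist_eq_norm]
  rfl

theorem norm_sub_starProjection_le_mul_norm {M N : Submodule 𝕜 E} [M.HasOrthogonalProjection]
    {δ : ℝ} (hNM : ∀ y ∈ N, ‖y‖ = 1 → infDist y (M : Set E) ≤ δ) {y : E} (hy : y ∈ N) :
    ‖y - M.starProjection y‖ ≤ δ * ‖y‖ := by
  rcases eq_or_ne y 0 with rfl | hy0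
  · simp
  have hy_pos : 0 < ‖y‖ := norm_pos_iff.mpr hy0
  have hunit := hNM ((‖y‖⁻¹ : 𝕜) • y) (N.smul_mem _ hy) (by simp [norm_smul, hy_pos.ne'])
  rw [infDist_eq_norm_sub_starProjection, map_smul, ← smul_sub, norm_smul] at hunit
  simp only [norm_inv, RCLike.norm_ofReal, abs_norm] at hunit
  rwa [inv_mul_le_iff₀ hy_pos, mul_comm] at hunit

theorem exists_mem_starProjection_eq {M N : Submodule 𝕜 E} [FiniteDimensional 𝕜 M]
    [FiniteDimensional 𝕜 N] (hdim : Module.finrank 𝕜 N = Module.finrank 𝕜 M) {δ : ℝ}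
    (hδ : δ < 1) (hNM : ∀ y ∈ N, ‖y‖ = 1 → infDist y (M : Set E) ≤ δ) {x : E} (hx : x ∈ M) :
    ∃ y ∈ N, M.starProjection y = x := by
  let P : N →ₗ[𝕜] M := M.orthogonalProjectionOnto.toLinearMap ∘ₗ N.subtype
  have hP : Function.Injective P := by
    rw [← LinearMap.ker_eq_bot, LinearMap.ker_eq_bot']
    rintro ⟨y, hy⟩ hPy
    have hPy' : M.starProjection y = 0 := congrArg Subtype.val hPy
    have hle := norm_sub_starProjection_le_mul_norm hNM hy
    rw [hPy', sub_zero] at hle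
    have : ‖y‖ = 0 := by nlinarith [norm_nonneg y]
    exact Subtype.ext (norm_eq_zero.mp this)
  obtain ⟨⟨y, hy⟩, hPy⟩ := (LinearMap.injective_iff_surjective_of_finrank_eq_finrank hdim).mp hP
    ⟨x, hx⟩
  exact ⟨y, hy, congrArg Subtype.val hPy⟩

theorem infDist_le_div_one_sub {M N : Submodule 𝕜 E} [FiniteDimensional 𝕜 M]
    [FiniteDimensional 𝕜 N] (hdim : Module.finrank 𝕜 N = Module.finrank 𝕜 M) {δ : ℝ}
    (hδ₀ : 0 ≤ δ) (hδ : δ < 1) (hNM : ∀ y ∈ N, ‖y‖ = 1 → infDist y (M : Set E) ≤ δ) {x : E}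
    (hx : x ∈ M) : infDist x (N : Set E) ≤ δ * ‖x‖ / (1 - δ) := by
  obtain ⟨y, hy, rfl⟩ := exists_mem_starProjection_eq hdim hδ hNM hx
  have hgap := norm_sub_starProjection_le_mul_norm hNM hy
  have hy_le : (1 - δ) * ‖y‖ ≤ ‖M.starProjection y‖ := by
    linarith [norm_le_norm_add_norm_sub' y (M.starProjection y)]
  rw [le_div_iff₀ (sub_pos.mpr hδ)]
  calc infDist (M.starProjection y) (N : Set E) * (1 - δ)
      ≤ ‖y - M.starProjection y‖ * (1 - δ) := by
        gcongr
        rw [← dist_eq_norm']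
        exact infDist_le_dist_of_mem hy
    _ ≤ δ * ((1 - δ) * ‖y‖) := by nlinarith
    _ ≤ δ * ‖M.starProjection y‖ := by gcongr

end Submodule

theorem div_one_sub_le_div_one_sub {a b : ℝ} (ha : 0 ≤ a) (hab : a ≤ b) (hb : b < 1) :
    a / (1 - a) ≤ b / (1 - b) := by
  gcongr
  linarith

theorem gap_estimate_equidimensional_general
    {X : Type*} [NormedAddCommGroup X] [InnerProductSpace ℂ X]
    (M N : Submodule ℂ X) (n : ℕ) (hn : 0 < n)
    [FiniteDimensional ℂ ↥M] [FiniteDimensional ℂ ↥N]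
    (hdimM : Module.finrank ℂ ↥M = n) (hdimN : Module.finrank ℂ ↥N = n)
    (δ : ℝ) (hδ : 0 ≤ δ)
    (hNM : ∀ y ∈ N, ‖y‖ = 1 → Metric.infDist y (M : Set X) ≤ δ)
    (hsmall : Real.sqrt n * δ < 1) :
    ∀ x ∈ M, ‖x‖ = 1 →
      Metric.infDist x (N : Set X) ≤ Real.sqrt n * δ / (1 - Real.sqrt n * δ) := by
  intro x hx hx1
  have hδ_le : δ ≤ Real.sqrt n * δ :=
    le_mul_of_one_le_left hδ (Real.one_le_sqrt.mpr (by exact_mod_cast hn))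
  calc infDist x (N : Set X) ≤ δ * ‖x‖ / (1 - δ) :=
        Submodule.infDist_le_div_one_sub (hdimN.trans hdimM.symm) hδ (hδ_le.trans_lt hsmall) hNM hx
    _ = δ / (1 - δ) := by rw [hx1, mul_one]
    _ ≤ Real.sqrt n * δ / (1 - Real.sqrt n * δ) := div_one_sub_le_div_one_sub hδ hδ_le hsmall

/-- Let `M, N` be `n`-dimensional subspaces of a Hilbert space (`n ≥ 1`).
If every unit vector of `N` has distance at most `δ` from `M` and `√n·δ < 1`, then every
unit vector of `M` has distance at most `√n·δ/(1 - √n·δ)` from `N`. -/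
theorem gap_estimate_equidimensional
    {X : Type*} [NormedAddCommGroup X] [InnerProductSpace ℂ X] [CompleteSpace X]
    (M N : Submodule ℂ X) (n : ℕ) (hn : 0 < n)
    [FiniteDimensional ℂ ↥M] [FiniteDimensional ℂ ↥N]
    (hdimM : Module.finrank ℂ ↥M = n) (hdimN : Module.finrank ℂ ↥N = n)
    (δ : ℝ) (hδ : 0 ≤ δ)
    (hNM : ∀ y ∈ N, ‖y‖ = 1 → Metric.infDist y (M : Set X) ≤ δ)
    (hsmall : Real.sqrt n * δ < 1) :
    ∀ x ∈ M, ‖x‖ = 1 →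
      Metric.infDist x (N : Set X) ≤ Real.sqrt n * δ / (1 - Real.sqrt n * δ) :=
  gap_estimate_equidimensional_general M N n hn hdimM hdimN δ hδ hNM hsmall
end
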